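/- arXiv:2006.03311 — 2 statements merged into one kernel-verified Lean document; each statement's English description precedes it below -/
import Mathlib

section
/- Let p ≥ 1, n ≥ 1, let x_1,…,x_n ∈ ℝ^p be nonzero vectors, and let T be a positive definite real symmetric p × p matrix satisfying Tyler's fixed-point equation T = (p/n) ∑_{i=1}^n x_i x_iᵀ / (x_iᵀ T^{-1} x_i). Define t_i = T^{-1/2} x_i / ‖T^{-1/2} x_i‖ for i = 1,…,n. Then ∑_{i=1}^n ∑_{j=1}^n (t_iᵀ t_j)² = n²/p. -/
open Matrix

/-- The Euclidean norm of a vector in `ℝ^p`. -/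
noncomputable def euclNorm {p : ℕ} (v : Fin p → ℝ) : ℝ :=
  Real.sqrt (∑ i, v i ^ 2)

/-- The square root of a positive semidefinite matrix, as defined in the older Mathlib
(`Matrix.PosSemidef.sqrt`, since removed). -/
noncomputable def Matrix.PosSemidef.sqrt {n 𝕜 : Type*} [Fintype n] [RCLike 𝕜] [DecidableEq n]
    [PartialOrder 𝕜] [StarOrderedRing 𝕜] {A : Matrix n n 𝕜} (hA : A.PosSemidef) : Matrix n n 𝕜 :=
  hA.1.eigenvectorUnitary.1 * diagonal ((↑) ∘ (√·) ∘ hA.1.eigenvalues) *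
  (star hA.1.eigenvectorUnitary : Matrix n n 𝕜)

/-!
Whitening by `S = T^{-1/2}` turns Tyler's equation into `(p/n) ∑ᵢ tᵢ tᵢᵀ = 1`: with `yᵢ = S xᵢ`,
the weight `xᵢᵀ T⁻¹ xᵢ` is `‖yᵢ‖²` and `S (xᵢ xᵢᵀ) S = yᵢ yᵢᵀ`. So the `tᵢ` form a tight frame, and
its frame potential is `∑ᵢ ∑ⱼ (tᵢᵀ tⱼ)² = tr ((∑ᵢ tᵢ tᵢᵀ)²) = (n/p)² p = n²/p`.
-/

namespace Matrix.PosSemidef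

variable {n : Type*} [Fintype n] [DecidableEq n] {A : Matrix n n ℝ}

theorem isHermitian_sqrt (hA : A.PosSemidef) : hA.sqrt.IsHermitian :=
  (PosSemidef.mul_mul_conjTranspose_same
    (posSemidef_diagonal_iff.2 fun _ => Real.sqrt_nonneg _) _).isHermitian

theorem sqrt_mul_self (hA : A.PosSemidef) : hA.sqrt * hA.sqrt = A := by
  set U : Matrix n n ℝ := (hA.1.eigenvectorUnitary : Matrix n n ℝ)
  have hU : star U * U = 1 := Unitary.coe_star_mul_self _
  conv_rhs => rw [hA.1.spectral_theorem, Unitary.conjStarAlgAut_apply]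
  calc hA.sqrt * hA.sqrt
      = U * (diagonal ((√·) ∘ hA.1.eigenvalues) * (star U * U) *
          diagonal ((√·) ∘ hA.1.eigenvalues)) * star U := by
        simp only [PosSemidef.sqrt, U, Matrix.mul_assoc]
        rfl -- `RCLike.ofReal : ℝ → ℝ` is definitionally the identity
    _ = U * diagonal hA.1.eigenvalues * star U := by
        rw [hU, Matrix.mul_one, diagonal_mul_diagonal]
        congr 3
        funext i
        exact Real.mul_self_sqrt (hA.eigenvalues_nonneg i)

end Matrix.PosSemidef

section OuterProducts

variable {ι m k R : Type*} [Fintype ι] [Fintype m]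

theorem mul_sum_smul_vecMulVec_mul_transpose [CommSemiring R] (S : Matrix k m R) (w : ι → R)
    (x : ι → m → R) :
    S * (∑ i, w i • vecMulVec (x i) (x i)) * Sᵀ = ∑ i, w i • vecMulVec (S *ᵥ x i) (S *ᵥ x i) := by
  simp only [Matrix.mul_sum, Matrix.sum_mul, Matrix.mul_smul, Matrix.smul_mul, mul_vecMulVec,
    vecMulVec_mul, vecMul_transpose]

theorem dotProduct_transpose_mul_mulVec [CommSemiring R] [Fintype k] (S : Matrix k m R)
    (x : m → R) : x ⬝ᵥ ((Sᵀ * S) *ᵥ x) = (S *ᵥ x) ⬝ᵥ (S *ᵥ x) := by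
  rw [← mulVec_mulVec, dotProduct_mulVec, vecMul_transpose]

theorem sum_sq_dotProduct_eq_trace [CommSemiring R] (t : ι → m → R) :
    ∑ i, ∑ j, (t i ⬝ᵥ t j) ^ 2 =
      trace ((∑ i, vecMulVec (t i) (t i)) * ∑ j, vecMulVec (t j) (t j)) := by
  simp only [Finset.sum_mul_sum, trace_sum, vecMulVec_mul_vecMulVec, trace_vecMulVec,
    dotProduct_smul, smul_eq_mul, sq]

theorem sum_sq_dotProduct_of_sum_vecMulVec_eq_smul_one [CommSemiring R] [DecidableEq m]
    {t : ι → m → R} {c : R} (ht : ∑ i, vecMulVec (t i) (t i) = c • 1) :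
    ∑ i, ∑ j, (t i ⬝ᵥ t j) ^ 2 = c ^ 2 * Fintype.card m := by
  rw [sum_sq_dotProduct_eq_trace, ht, smul_mul_smul, Matrix.mul_one, trace_smul, trace_one,
    smul_eq_mul, sq]

end OuterProducts

theorem euclNorm_sq {p : ℕ} (v : Fin p → ℝ) : euclNorm v ^ 2 = v ⬝ᵥ v := by
  rw [euclNorm, Real.sq_sqrt (by positivity)]
  simp [dotProduct, sq]

theorem vecMulVec_euclNorm_inv_smul {p : ℕ} (v : Fin p → ℝ) :
    vecMulVec ((euclNorm v)⁻¹ • v) ((euclNorm v)⁻¹ • v) = (v ⬝ᵥ v)⁻¹ • vecMulVec v v := by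
  rw [smul_vecMulVec, vecMulVec_smul, smul_smul, ← mul_inv, ← sq, euclNorm_sq]

theorem tyler_normalized_gram_sum_general (p n : ℕ) (hp : 1 ≤ p) (hn : 1 ≤ n)
    (x : Fin n → Fin p → ℝ)
    (T : Matrix (Fin p) (Fin p) ℝ) (hT : T.PosDef)
    (htyler : T = ((p : ℝ) / n) •
      ∑ i, (x i ⬝ᵥ (T⁻¹ *ᵥ x i))⁻¹ • vecMulVec (x i) (x i))
    (t : Fin n → Fin p → ℝ)
    (ht : ∀ i, t i = (euclNorm ((hT.posSemidef.sqrt)⁻¹ *ᵥ x i))⁻¹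
      • ((hT.posSemidef.sqrt)⁻¹ *ᵥ x i)) :
    ∑ i, ∑ j, (t i ⬝ᵥ t j) ^ 2 = (n : ℝ) ^ 2 / p := by
  set Q := hT.posSemidef.sqrt
  have hQT : Q * Q = T := hT.posSemidef.sqrt_mul_self
  have hQ : IsUnit Q.det := by
    rw [← isUnit_mul_self_iff, ← det_mul, hQT]
    exact hT.isUnit.map detMonoidHom
  set S := Q⁻¹
  have hS : Sᵀ = S := by
    simpa [IsHermitian, conjTranspose_eq_transpose_of_trivial] using
      hT.posSemidef.isHermitian_sqrt.inv
  have hTinv : T⁻¹ = Sᵀ * S := by rw [hS, ← hQT, Matrix.mul_inv_rev]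
  have hwhite : S * T * Sᵀ = 1 := by
    rw [hS, ← hQT, ← Matrix.mul_assoc, nonsing_inv_mul Q hQ, Matrix.one_mul, mul_nonsing_inv Q hQ]
  have hframe : ∑ i, vecMulVec (t i) (t i) = ((n : ℝ) / p) • 1 := by
    have hpn : ((p : ℝ) / n) ≠ 0 := by positivity
    simp only [ht, vecMulVec_euclNorm_inv_smul, ← mul_sum_smul_vecMulVec_mul_transpose,
      ← dotProduct_transpose_mul_mulVec, ← hTinv]
    rw [← inv_smul_smul₀ hpn (∑ i, _), ← htyler, Matrix.mul_smul, Matrix.smul_mul, hwhite,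
      inv_div]
  rw [sum_sq_dotProduct_of_sum_vecMulVec_eq_smul_one hframe, Fintype.card_fin]
  field_simp

/-- If `T` is a positive definite solution of Tyler's fixed-point equation
`T = (p/n) ∑ᵢ xᵢ xᵢᵀ / (xᵢᵀ T⁻¹ xᵢ)` and `tᵢ = T^{-1/2} xᵢ / ‖T^{-1/2} xᵢ‖`, then
`∑ᵢ ∑ⱼ (tᵢᵀ tⱼ)² = n²/p`. -/
theorem tyler_normalized_gram_sum (p n : ℕ) (hp : 1 ≤ p) (hn : 1 ≤ n)
    (x : Fin n → Fin p → ℝ) (hx : ∀ i, x i ≠ 0)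
    (T : Matrix (Fin p) (Fin p) ℝ) (hT : T.PosDef)
    (htyler : T = ((p : ℝ) / n) •
      ∑ i, (x i ⬝ᵥ (T⁻¹ *ᵥ x i))⁻¹ • vecMulVec (x i) (x i))
    (t : Fin n → Fin p → ℝ)
    (ht : ∀ i, t i = (euclNorm ((hT.posSemidef.sqrt)⁻¹ *ᵥ x i))⁻¹
      • ((hT.posSemidef.sqrt)⁻¹ *ᵥ x i)) :
    ∑ i, ∑ j, (t i ⬝ᵥ t j) ^ 2 = (n : ℝ) ^ 2 / p :=
  tyler_normalized_gram_sum_general p n hp hn x T hT htyler t ht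
end

section
/- Positivity of the quadratic Gegenbauer coefficient of the Giné statistic: Let p ≥ 3 be an integer. Then the alternating series γ₂(p) = ∑_{q=1}^∞ (−1)^{q−1} · [ (p−1)(2q−1)(4q+p−2) / ( (p−2)(2q+p−1) · 4π ) ] · ( Γ((p−1)/2) Γ(q−1/2) / Γ(q+(p−1)/2) )² · Γ(q+p/2) / ( Γ(p/2−1) · (q−1)! ) converges and its sum is strictly positive. -/
open Filter Real

noncomputable def gineT (p q : ℕ) : ℝ :=
  (((p : ℝ) - 1) * (2 * (q : ℝ) - 1) * (4 * (q : ℝ) + (p : ℝ) - 2)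
      / (((p : ℝ) - 2) * (2 * (q : ℝ) + (p : ℝ) - 1) * (4 * Real.pi))) *
    (Real.Gamma (((p : ℝ) - 1) / 2) * Real.Gamma ((q : ℝ) - 1 / 2)
      / Real.Gamma ((q : ℝ) + ((p : ℝ) - 1) / 2)) ^ 2 *
    (Real.Gamma ((q : ℝ) + (p : ℝ) / 2)
      / (Real.Gamma ((p : ℝ) / 2 - 1) * (Nat.factorial (q - 1) : ℝ)))

lemma gineT_pos {p q : ℕ} (hp : 3 ≤ p) (hq : 1 ≤ q) : 0 < gineT p q := by
  have hp' : (3 : ℝ) ≤ p := by exact_mod_cast hp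
  have hq' : (1 : ℝ) ≤ q := by exact_mod_cast hq
  have hpi := Real.pi_pos
  have h1 : (0:ℝ) < Real.Gamma (((p : ℝ) - 1) / 2) := Real.Gamma_pos_of_pos (by linarith)
  have h2 : (0:ℝ) < Real.Gamma ((q : ℝ) - 1 / 2) := Real.Gamma_pos_of_pos (by linarith)
  have h3 : (0:ℝ) < Real.Gamma ((q : ℝ) + ((p : ℝ) - 1) / 2) := Real.Gamma_pos_of_pos (by linarith)
  have h4 : (0:ℝ) < Real.Gamma ((q : ℝ) + (p : ℝ) / 2) := Real.Gamma_pos_of_pos (by linarith)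
  have h5 : (0:ℝ) < Real.Gamma ((p : ℝ) / 2 - 1) := Real.Gamma_pos_of_pos (by linarith)
  have h6 : (0:ℝ) < (Nat.factorial (q - 1) : ℝ) := by positivity
  unfold gineT
  have : (0:ℝ) < ((p : ℝ) - 1) * (2 * (q : ℝ) - 1) * (4 * (q : ℝ) + (p : ℝ) - 2)
      / (((p : ℝ) - 2) * (2 * (q : ℝ) + (p : ℝ) - 1) * (4 * Real.pi)) := by
    apply div_pos
    · apply mul_pos (mul_pos (by linarith) (by linarith)) (by linarith)
    · apply mul_pos (mul_pos (by linarith) (by linarith)) (by linarith)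
  positivity

set_option maxHeartbeats 1600000 in
lemma gine_ratio_aux (P Q pi A B C D X F : ℝ) (hQ : 1 ≤ Q) (hP : 3 ≤ P)
    (hpi : 0 < pi) (hB : B ≠ 0) (hD : D ≠ 0) (hF : F ≠ 0) (hQ0 : Q ≠ 0) :
    ((P-1)*(2*(Q+1)-1)*(4*(Q+1)+P-2) / ((P-2)*(2*(Q+1)+P-1)*(4*pi))) *
      (X * ((Q-1/2)*A) / ((Q+(P-1)/2)*B))^2 * (((Q+P/2)*C) / (D * (Q*F)))
    = ((2*Q+1)*(2*Q-1)*(4*Q+P+2)*(2*Q+P)) /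
        ((2*Q)*(4*Q+P-2)*(2*Q+P+1)*(2*Q+P-1)) *
      (((P-1)*(2*Q-1)*(4*Q+P-2) / ((P-2)*(2*Q+P-1)*(4*pi))) * (X*A/B)^2 * (C/(D*F))) := by
  have d1 : (P - 2) ≠ 0 := by linarith
  have d2 : (2*Q + P - 1) ≠ 0 := by nlinarith
  have d3 : (2*Q + P + 1) ≠ 0 := by nlinarith
  have d4 : (4*Q + P - 2) ≠ 0 := by nlinarith
  have d5 : pi ≠ 0 := ne_of_gt hpi
  have d6 : (Q + (P-1)/2) ≠ 0 := by nlinarith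
  have d7 : (2*(Q+1) + P - 1) ≠ 0 := by nlinarith
  have d8 : (4*(Q+1) + P - 2) ≠ 0 := by nlinarith
  have e : 2*(Q+1) + P - 1 = 2*Q + P + 1 := by ring
  rw [e]
  simp only [div_pow, div_mul_div_comm]
  rw [div_eq_div_iff ?_ ?_]
  · ring
  · exact mul_ne_zero (mul_ne_zero (mul_ne_zero (mul_ne_zero d1 d3) (by positivity))
      (pow_ne_zero 2 (mul_ne_zero d6 hB))) (mul_ne_zero hD (mul_ne_zero hQ0 hF))
  · exact mul_ne_zero (mul_ne_zero (mul_ne_zero (mul_ne_zero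
      (mul_ne_zero two_ne_zero hQ0) d4) d3) d2)
      (mul_ne_zero (mul_ne_zero (mul_ne_zero (mul_ne_zero d1 d2) (by positivity))
        (pow_ne_zero 2 hB)) (mul_ne_zero hD hF))

lemma gineT_ratio {p q : ℕ} (hp : 3 ≤ p) (hq : 1 ≤ q) :
    gineT p (q + 1) = (((2*(q:ℝ)+1)*(2*(q:ℝ)-1)*(4*(q:ℝ)+(p:ℝ)+2)*(2*(q:ℝ)+(p:ℝ))) /
      ((2*(q:ℝ))*(4*(q:ℝ)+(p:ℝ)-2)*(2*(q:ℝ)+(p:ℝ)+1)*(2*(q:ℝ)+(p:ℝ)-1))) * gineT p q := by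
  have hp' : (3 : ℝ) ≤ p := by exact_mod_cast hp
  have hq' : (1 : ℝ) ≤ q := by exact_mod_cast hq
  have hpi := Real.pi_pos
  have e1 : ((q + 1 : ℕ) : ℝ) - 1 / 2 = ((q : ℝ) - 1/2) + 1 := by push_cast; ring
  have e2 : ((q + 1 : ℕ) : ℝ) + ((p:ℝ) - 1) / 2 = ((q : ℝ) + ((p:ℝ)-1)/2) + 1 := by push_cast; ring
  have e3 : ((q + 1 : ℕ) : ℝ) + (p:ℝ) / 2 = ((q : ℝ) + (p:ℝ)/2) + 1 := by push_cast; ring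
  have e4 : (q + 1) - 1 = q := by omega
  have g1 : Real.Gamma (((q + 1 : ℕ) : ℝ) - 1 / 2)
      = ((q : ℝ) - 1/2) * Real.Gamma ((q : ℝ) - 1/2) := by
    rw [e1, Real.Gamma_add_one (ne_of_gt (by linarith))]
  have g2 : Real.Gamma (((q + 1 : ℕ) : ℝ) + ((p:ℝ) - 1) / 2)
      = ((q : ℝ) + ((p:ℝ)-1)/2) * Real.Gamma ((q : ℝ) + ((p:ℝ)-1)/2) := by
    rw [e2, Real.Gamma_add_one (ne_of_gt (by linarith))]
  have g3 : Real.Gamma (((q + 1 : ℕ) : ℝ) + (p:ℝ) / 2)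
      = ((q : ℝ) + (p:ℝ)/2) * Real.Gamma ((q : ℝ) + (p:ℝ)/2) := by
    rw [e3, Real.Gamma_add_one (ne_of_gt (by linarith))]
  have gf : (Nat.factorial ((q + 1) - 1) : ℝ) = (q : ℝ) * (Nat.factorial (q - 1) : ℝ) := by
    rw [e4]
    obtain ⟨m, rfl⟩ : ∃ m, q = m + 1 := ⟨q - 1, by omega⟩
    rw [Nat.factorial_succ]
    push_cast
    simp
  have hB : Real.Gamma ((q : ℝ) + ((p:ℝ)-1)/2) ≠ 0 :=
    ne_of_gt (Real.Gamma_pos_of_pos (by linarith))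
  have hD : Real.Gamma ((p : ℝ) / 2 - 1) ≠ 0 :=
    ne_of_gt (Real.Gamma_pos_of_pos (by linarith))
  have hF : (Nat.factorial (q - 1) : ℝ) ≠ 0 := by positivity
  have hq0 : (q : ℝ) ≠ 0 := by linarith
  unfold gineT
  rw [g1, g2, g3, gf]
  have := gine_ratio_aux (p:ℝ) (q:ℝ) Real.pi (Real.Gamma ((q:ℝ) - 1/2))
    (Real.Gamma ((q:ℝ) + ((p:ℝ)-1)/2)) (Real.Gamma ((q:ℝ) + (p:ℝ)/2))
    (Real.Gamma ((p:ℝ)/2 - 1)) (Real.Gamma (((p:ℝ)-1)/2)) ((Nat.factorial (q-1) : ℝ))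
    hq' hp' hpi hB hD hF hq0
  push_cast
  convert this using 3 <;> push_cast <;> ring


lemma gineT_step {p q : ℕ} (hp : 3 ≤ p) (hq : 1 ≤ q) :
    gineT p (q + 1) ≤ ((2*(q:ℝ)+1)/(2*(q:ℝ)+2)) * gineT p q := by
  have hp' : (3 : ℝ) ≤ p := by exact_mod_cast hp
  have hq' : (1 : ℝ) ≤ q := by exact_mod_cast hq
  rw [gineT_ratio hp hq]
  apply mul_le_mul_of_nonneg_right _ (le_of_lt (gineT_pos hp hq))
  have c1 : (0:ℝ) < 2*(q:ℝ) := by linarith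
  have c2 : (0:ℝ) < 4*(q:ℝ)+(p:ℝ)-2 := by linarith
  have c3 : (0:ℝ) < 2*(q:ℝ)+(p:ℝ)+1 := by linarith
  have c4 : (0:ℝ) < 2*(q:ℝ)+(p:ℝ)-1 := by linarith
  have c5 : (0:ℝ) < 2*(q:ℝ)+2 := by linarith
  rw [div_le_div_iff₀ (mul_pos (mul_pos (mul_pos c1 c2) c3) c4) c5]
  have hA : ((2*(q:ℝ)-1)*(4*(q:ℝ)+(p:ℝ)+2))*(2*(q:ℝ)+(p:ℝ))
      ≤ ((2*(q:ℝ))*(4*(q:ℝ)+(p:ℝ)-2))*(2*(q:ℝ)+(p:ℝ)+1) := by nlinarith [sq_nonneg ((p:ℝ))]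
  have hA0 : (0:ℝ) ≤ ((2*(q:ℝ)-1)*(4*(q:ℝ)+(p:ℝ)+2))*(2*(q:ℝ)+(p:ℝ)) := by
    apply mul_nonneg (mul_nonneg (by linarith) (by linarith)) (by linarith)
  have hB0 : (0:ℝ) ≤ ((2*(q:ℝ))*(4*(q:ℝ)+(p:ℝ)-2))*(2*(q:ℝ)+(p:ℝ)+1) := le_trans hA0 hA
  have h1 : (2*(q:ℝ)+2) * (((2*(q:ℝ)-1)*(4*(q:ℝ)+(p:ℝ)+2))*(2*(q:ℝ)+(p:ℝ)))
      ≤ (2*(q:ℝ)+2) * (((2*(q:ℝ))*(4*(q:ℝ)+(p:ℝ)-2))*(2*(q:ℝ)+(p:ℝ)+1)) :=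
    mul_le_mul_of_nonneg_left hA (by linarith)
  have h2 : (2*(q:ℝ)+2) * (((2*(q:ℝ))*(4*(q:ℝ)+(p:ℝ)-2))*(2*(q:ℝ)+(p:ℝ)+1))
      ≤ (2*(q:ℝ)+(p:ℝ)-1) * (((2*(q:ℝ))*(4*(q:ℝ)+(p:ℝ)-2))*(2*(q:ℝ)+(p:ℝ)+1)) :=
    mul_le_mul_of_nonneg_right (by linarith) hB0
  have h3 := mul_le_mul_of_nonneg_left (h1.trans h2)
    (by linarith : (0:ℝ) ≤ 2*(q:ℝ)+1)
  nlinarith [h3]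

/-- **Positivity of the quadratic Gegenbauer coefficient of the Giné statistic.**
For every integer `p ≥ 3` the alternating series
`γ₂(p) = ∑_{q≥1} (−1)^{q−1} [(p−1)(2q−1)(4q+p−2) / ((p−2)(2q+p−1)·4π)]
  · (Γ((p−1)/2) Γ(q−1/2) / Γ(q+(p−1)/2))² · Γ(q+p/2) / (Γ(p/2−1)(q−1)!)`
converges (in the sense of partial sums) and its sum is strictly positive. -/
theorem gine_quadratic_coefficient_pos (p : ℕ) (hp : 3 ≤ p) :
    ∃ L : ℝ, 0 < L ∧
      Tendsto (fun N : ℕ => ∑ q ∈ Finset.Icc 1 N,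
          (-1 : ℝ) ^ (q - 1) *
            (((p : ℝ) - 1) * (2 * (q : ℝ) - 1) * (4 * (q : ℝ) + (p : ℝ) - 2)
              / (((p : ℝ) - 2) * (2 * (q : ℝ) + (p : ℝ) - 1) * (4 * Real.pi))) *
            (Real.Gamma (((p : ℝ) - 1) / 2) * Real.Gamma ((q : ℝ) - 1 / 2)
              / Real.Gamma ((q : ℝ) + ((p : ℝ) - 1) / 2)) ^ 2 *
            (Real.Gamma ((q : ℝ) + (p : ℝ) / 2)
              / (Real.Gamma ((p : ℝ) / 2 - 1) * (Nat.factorial (q - 1) : ℝ))))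
        atTop (nhds L) := by
  set f : ℕ → ℝ := fun n => gineT p (n + 1) with hf
  have hf_pos : ∀ n, 0 < f n := fun n => gineT_pos hp (by omega)
  have hstep : ∀ n : ℕ, f (n + 1) ≤ ((2*(n:ℝ)+3)/(2*(n:ℝ)+4)) * f n := by
    intro n
    have := gineT_step (p := p) (q := n + 1) hp (by omega)
    have e1 : (2*((n+1:ℕ):ℝ)+1) = 2*(n:ℝ)+3 := by push_cast; ring
    have e2 : (2*((n+1:ℕ):ℝ)+2) = 2*(n:ℝ)+4 := by push_cast; ring
    rw [e1, e2] at this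
    exact this
  have hratio_lt : ∀ n : ℕ, (2*(n:ℝ)+3)/(2*(n:ℝ)+4) < 1 := by
    intro n
    rw [div_lt_one (by positivity)]
    have : (0:ℝ) ≤ n := Nat.cast_nonneg n
    linarith
  have hanti : Antitone f := by
    apply antitone_nat_of_succ_le
    intro n
    calc f (n + 1) ≤ ((2*(n:ℝ)+3)/(2*(n:ℝ)+4)) * f n := hstep n
      _ ≤ 1 * f n := mul_le_mul_of_nonneg_right (hratio_lt n).le (hf_pos n).le
      _ = f n := one_mul _
  -- product bound
  set Pr : ℕ → ℝ := fun n => ∏ j ∈ Finset.range n, ((2*(j:ℝ)+3)/(2*(j:ℝ)+4)) with hPr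
  have hPr_nonneg : ∀ n, 0 ≤ Pr n := by
    intro n
    apply Finset.prod_nonneg
    intro j _
    positivity
  have hfP : ∀ n, f n ≤ f 0 * Pr n := by
    intro n
    induction n with
    | zero => simp [hPr]
    | succ n ih =>
      calc f (n + 1) ≤ ((2*(n:ℝ)+3)/(2*(n:ℝ)+4)) * f n := hstep n
        _ ≤ ((2*(n:ℝ)+3)/(2*(n:ℝ)+4)) * (f 0 * Pr n) :=
            mul_le_mul_of_nonneg_left ih (by positivity)
        _ = f 0 * Pr (n + 1) := by
            simp only [hPr, Finset.prod_range_succ]; ring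
  have hPr_sq : ∀ n, (Pr n)^2 ≤ 3 / (2*(n:ℝ)+3) := by
    intro n
    induction n with
    | zero => norm_num [hPr]
    | succ n ih =>
      have h1 : (0:ℝ) ≤ n := Nat.cast_nonneg n
      have e : Pr (n+1) = Pr n * ((2*(n:ℝ)+3)/(2*(n:ℝ)+4)) := by
        simp only [hPr]; exact Finset.prod_range_succ _ n
      rw [e, mul_pow]
      have h2 : ((2*(n:ℝ)+3)/(2*(n:ℝ)+4))^2 ≥ 0 := by positivity
      calc (Pr n)^2 * ((2*(n:ℝ)+3)/(2*(n:ℝ)+4))^2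
          ≤ (3 / (2*(n:ℝ)+3)) * ((2*(n:ℝ)+3)/(2*(n:ℝ)+4))^2 :=
            mul_le_mul_of_nonneg_right ih h2
        _ ≤ 3 / (2*((n+1:ℕ):ℝ)+3) := by
            push_cast
            rw [div_pow, div_mul_div_comm, div_le_div_iff₀ (by positivity) (by positivity)]
            nlinarith
  have hPr_le : ∀ n, Pr n ≤ Real.sqrt (3 / (2*(n:ℝ)+3)) := by
    intro n
    have h1 : (0:ℝ) ≤ n := Nat.cast_nonneg n
    calc Pr n = Real.sqrt ((Pr n)^2) := (Real.sqrt_sq (hPr_nonneg n)).symm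
      _ ≤ Real.sqrt (3 / (2*(n:ℝ)+3)) := Real.sqrt_le_sqrt (hPr_sq n)
  have hsqrt0 : Tendsto (fun n : ℕ => Real.sqrt (3 / (2*(n:ℝ)+3))) atTop (nhds 0) := by
    have h3 : Tendsto (fun n : ℕ => 3 / (2*(n:ℝ)+3)) atTop (nhds 0) := by
      apply Tendsto.div_atTop tendsto_const_nhds
      apply tendsto_atTop_add_const_right
      exact (tendsto_natCast_atTop_atTop (R := ℝ)).const_mul_atTop two_pos
    have h4 := (Real.continuous_sqrt.tendsto 0).comp h3
    rw [Real.sqrt_zero] at h4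
    exact h4
  have hf0 : Tendsto f atTop (nhds 0) := by
    have hupper : Tendsto (fun n : ℕ => f 0 * Real.sqrt (3 / (2*(n:ℝ)+3))) atTop (nhds 0) := by
      have := hsqrt0.const_mul (f 0)
      simpa using this
    apply tendsto_of_tendsto_of_tendsto_of_le_of_le tendsto_const_nhds hupper
    · exact fun n => (hf_pos n).le
    · intro n
      exact le_trans (hfP n) (mul_le_mul_of_nonneg_left (hPr_le n) (hf_pos 0).le)
  obtain ⟨L, hL⟩ := hanti.tendsto_alternating_series_of_tendsto_zero hf0
  have hL_lb := hanti.alternating_series_le_tendsto hL 1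
  have hsum2 : ∑ i ∈ Finset.range (2 * 1), (-1 : ℝ) ^ i * f i = f 0 - f 1 := by
    simp [Finset.sum_range_succ]
    ring
  have hf1_lt : f 1 < f 0 := by
    have h := hstep 0
    have h' := hratio_lt 0
    norm_num at h h'
    nlinarith [hf_pos 0, hf_pos 1]
  refine ⟨L, ?_, ?_⟩
  · rw [hsum2] at hL_lb
    linarith
  · have heq : (fun N : ℕ => ∑ q ∈ Finset.Icc 1 N,
          (-1 : ℝ) ^ (q - 1) *
            (((p : ℝ) - 1) * (2 * (q : ℝ) - 1) * (4 * (q : ℝ) + (p : ℝ) - 2)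
              / (((p : ℝ) - 2) * (2 * (q : ℝ) + (p : ℝ) - 1) * (4 * Real.pi))) *
            (Real.Gamma (((p : ℝ) - 1) / 2) * Real.Gamma ((q : ℝ) - 1 / 2)
              / Real.Gamma ((q : ℝ) + ((p : ℝ) - 1) / 2)) ^ 2 *
            (Real.Gamma ((q : ℝ) + (p : ℝ) / 2)
              / (Real.Gamma ((p : ℝ) / 2 - 1) * (Nat.factorial (q - 1) : ℝ))))
        = fun N : ℕ => ∑ i ∈ Finset.range N, (-1 : ℝ) ^ i * f i := by
      funext N
      rw [← Finset.Ico_add_one_right_eq_Icc, Finset.sum_Ico_eq_sum_range]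
      simp only [Nat.add_sub_cancel, Nat.succ_sub_one]
      apply Finset.sum_congr rfl
      intro i _
      have e1 : (1 + i) - 1 = i := by omega
      have e2 : (1 + i) = i + 1 := by omega
      rw [e1, e2, hf]
      unfold gineT
      push_cast
      ring
    rw [heq]
    exact hL
end
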